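/- arXiv:1806.05902 — 2 statements merged into one kernel-verified Lean document; each statement's English description precedes it below -/
import Mathlib

section
/- For every integer n ≥ 5, the commutator subgroup SG_n' of the singular braid group SG_n is generated by a set of at most 2n − 4 elements; i.e., there exists a subset S of SG_n with cardinality at most 2n − 4 whose generated subgroup equals [SG_n, SG_n]. -/
/-!
Write `a_i = σ_i σ_1⁻¹` and `b_i = ρ_i ρ_1⁻¹` for `2 ≤ i ≤ n - 1` (`genDiv`, with `σ_1` at
position `0`); these `2n - 4` elements generate the commutator subgroup. They lie in it because
the braid relation makes all `σ_i` conjugate and the relation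
`ρ_i σ_{i+1} σ_i = σ_{i+1} σ_i ρ_{i+1}` makes all `ρ_i` conjugate. Their closure `H` is normal:
conjugation by `σ_1^{±1}` or `ρ_1^{±1}` fixes `a_i` and `b_i` for `i ≥ 3`, while `a_2` and `b_2`
commute with `σ_4` and `ρ_4`, so on them conjugation by `σ_1` (resp. `ρ_1`) is conjugation by
`a_4⁻¹` (resp. `b_4⁻¹`), an element of `H`; this is where `n ≥ 5` enters. Modulo `H` every `σ_i` is
congruent to `σ_1` and every `ρ_i` to `ρ_1`, and these two commute, so `SG_n ⧸ H` is abelian.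
-/

namespace SingBraid

/-- The free-group generator word for `σ_{i+1}` (0-indexed `i`). -/
def σw (n : ℕ) (i : Fin (n-1)) : FreeGroup (Fin (n-1) ⊕ Fin (n-1)) := FreeGroup.of (Sum.inl i)

/-- The free-group generator word for `ρ_{i+1}` (0-indexed `i`). -/
def ρw (n : ℕ) (i : Fin (n-1)) : FreeGroup (Fin (n-1) ⊕ Fin (n-1)) := FreeGroup.of (Sum.inr i)

/-- Defining relators of the singular braid group `SG_n`. -/
def sgRels (n : ℕ) : Set (FreeGroup (Fin (n-1) ⊕ Fin (n-1))) :=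
  {r | ∃ i j : Fin (n-1), ((i:ℕ)+1 < (j:ℕ) ∨ (j:ℕ)+1 < (i:ℕ)) ∧
      r = σw n i * σw n j * (σw n i)⁻¹ * (σw n j)⁻¹} ∪
  {r | ∃ i j : Fin (n-1), (j:ℕ) = (i:ℕ)+1 ∧
      r = σw n i * σw n j * σw n i * (σw n j * σw n i * σw n j)⁻¹} ∪
  {r | ∃ i j : Fin (n-1), ((i:ℕ)+1 < (j:ℕ) ∨ (j:ℕ)+1 < (i:ℕ)) ∧
      r = ρw n i * ρw n j * (ρw n i)⁻¹ * (ρw n j)⁻¹} ∪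
  {r | ∃ i j : Fin (n-1), (j:ℕ) = (i:ℕ)+1 ∧
      r = ρw n i * σw n j * σw n i * (σw n j * σw n i * ρw n j)⁻¹} ∪
  {r | ∃ i j : Fin (n-1), (j:ℕ) = (i:ℕ)+1 ∧
      r = ρw n j * σw n i * σw n j * (σw n i * σw n j * ρw n i)⁻¹} ∪
  {r | ∃ i j : Fin (n-1), (i = j ∨ (i:ℕ)+1 < (j:ℕ) ∨ (j:ℕ)+1 < (i:ℕ)) ∧
      r = σw n i * ρw n j * (σw n i)⁻¹ * (ρw n j)⁻¹}

/-- The singular braid group `SG_n`, given by the Baez–Birman presentation. -/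
abbrev SG (n : ℕ) := PresentedGroup (sgRels n)

/-- The generator `σ_{i+1}` of `SG_n` (0-indexed `i`). -/
def σ (n : ℕ) (i : Fin (n-1)) : SG n := PresentedGroup.of (Sum.inl i)

/-- The generator `ρ_{i+1}` of `SG_n` (0-indexed `i`). -/
def ρ (n : ℕ) (i : Fin (n-1)) : SG n := PresentedGroup.of (Sum.inr i)

end SingBraid

namespace Subgroup

variable {G : Type*} [Group G]

theorem conj_mem_closure {S : Set G} {g : G} (hS : ∀ x ∈ S, g * x * g⁻¹ ∈ closure S)
    {x : G} (hx : x ∈ closure S) : g * x * g⁻¹ ∈ closure S :=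
  (closure_le ((closure S).comap (MulAut.conj g).toMonoidHom)).mpr hS hx

theorem mem_normalizer_closure {S : Set G} {g : G}
    (h₁ : ∀ x ∈ S, g * x * g⁻¹ ∈ closure S) (h₂ : ∀ x ∈ S, g⁻¹ * x * g ∈ closure S) :
    g ∈ normalizer (closure S : Set G) := by
  refine mem_normalizer_iff.mpr fun x => ⟨conj_mem_closure h₁, fun hx => ?_⟩
  have := conj_mem_closure (g := g⁻¹) (by simpa using h₂) hx
  simpa [mul_assoc] using this

/-- On elements commuting with `y`, conjugation by `g` agrees with conjugation by
`(y * g⁻¹)⁻¹ ∈ closure S`. -/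
theorem mem_normalizer_closure_of_commute {S : Set G} {g y : G} (hy : y * g⁻¹ ∈ closure S)
    (hyg : Commute y g) (hS : ∀ x ∈ S, Commute g x ∨ Commute y x) :
    g ∈ normalizer (closure S : Set G) := by
  refine mem_normalizer_closure (fun x hx => ?_) (fun x hx => ?_) <;>
    rcases hS x hx with hgx | hyx
  · rw [hgx.mul_inv_cancel]; exact subset_closure hx
  · have : g * x * g⁻¹ = (y * g⁻¹)⁻¹ * x * (y * g⁻¹) := by
      calc g * x * g⁻¹ = g * (y⁻¹ * x * y) * g⁻¹ := by rw [hyx.inv_mul_cancel]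
        _ = (y * g⁻¹)⁻¹ * x * (y * g⁻¹) := by group
    rw [this]
    exact mul_mem (mul_mem (inv_mem hy) (subset_closure hx)) hy
  · rw [hgx.inv_mul_cancel]; exact subset_closure hx
  · have : g⁻¹ * x * g = (y * g⁻¹) * x * (y * g⁻¹)⁻¹ := by
      calc g⁻¹ * x * g = y * (g⁻¹ * x * g) * y⁻¹ :=
            (((hyg.inv_right.mul_right hyx).mul_right hyg).mul_inv_cancel).symm
        _ = (y * g⁻¹) * x * (y * g⁻¹)⁻¹ := by group
    rw [this]
    exact mul_mem (mul_mem hy (subset_closure hx)) (inv_mem hy)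

theorem commutator_le_of_closure_eq_top {H : Subgroup G} [H.Normal] {T : Set G}
    (hT : closure T = ⊤) (hcomm : ∀ x ∈ T, ∀ y ∈ T, Commute (x : G ⧸ H) y) :
    _root_.commutator G ≤ H := by
  rw [← Normal.quotient_commutative_iff_commutator_le]
  set S := QuotientGroup.mk' H '' T
  have hS : closure S = ⊤ := by
    rw [← MonoidHom.map_closure, hT, ← MonoidHom.range_eq_map, MonoidHom.range_eq_top]
    exact QuotientGroup.mk'_surjective H
  have hcent : closure S ≤ centralizer S := by
    rw [closure_le]
    rintro _ ⟨x, hx, rfl⟩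
    rw [SetLike.mem_coe, mem_centralizer_iff]
    rintro _ ⟨y, hy, rfl⟩
    exact hcomm y hy x hx
  refine ⟨⟨fun a b => ?_⟩⟩
  have ha : a ∈ closure S := hS ▸ mem_top a
  have hb : b ∈ closure S := hS ▸ mem_top b
  exact mem_centralizer_iff.mp (closure_le_centralizer_centralizer S hb) a (hcent ha)

end Subgroup

variable {G : Type*} [Group G]

open scoped commutatorElement in
theorem IsConj.div_mem_commutator {a b : G} (h : IsConj a b) : a / b ∈ commutator G := by
  obtain ⟨c, rfl⟩ := isConj_iff.mp h
  have : a / (c * a * c⁻¹) = ⁅a, c⁆ := by rw [div_eq_mul_inv]; group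
  rw [this, commutator_def]
  exact Subgroup.commutator_mem_commutator (Subgroup.mem_top a) (Subgroup.mem_top c)

theorem isConj_of_isConj_succ {m : ℕ} (f : Fin m → G)
    (hf : ∀ (k : ℕ) (hk : k + 1 < m), IsConj (f ⟨k, by omega⟩) (f ⟨k + 1, hk⟩)) (i j : Fin m) :
    IsConj (f i) (f j) := by
  have h0 : 0 < m := i.pos
  have key : ∀ (k : ℕ) (hk : k < m), IsConj (f ⟨0, h0⟩) (f ⟨k, hk⟩) := by
    intro k
    induction k with
    | zero => exact fun _ => IsConj.refl _
    | succ k ih => exact fun hk => (ih (by omega)).trans (hf k hk)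
  exact (key i i.isLt).symm.trans (key j j.isLt)

namespace SingBraid

variable {n : ℕ}

theorem σ_commute_σ {i j : Fin (n-1)} (h : (i:ℕ)+1 < (j:ℕ) ∨ (j:ℕ)+1 < (i:ℕ)) :
    Commute (σ n i) (σ n j) :=
  commutatorElement_eq_one_iff_commute.mp <| PresentedGroup.one_of_mem <|
    Or.inl <| Or.inl <| Or.inl <| Or.inl <| Or.inl ⟨i, j, h, rfl⟩

theorem σ_braid {i j : Fin (n-1)} (h : (j:ℕ) = (i:ℕ)+1) :
    σ n i * σ n j * σ n i = σ n j * σ n i * σ n j :=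
  PresentedGroup.mk_eq_mk_of_mul_inv_mem <|
    Or.inl <| Or.inl <| Or.inl <| Or.inl <| Or.inr ⟨i, j, h, rfl⟩

theorem ρ_commute_ρ {i j : Fin (n-1)} (h : (i:ℕ)+1 < (j:ℕ) ∨ (j:ℕ)+1 < (i:ℕ)) :
    Commute (ρ n i) (ρ n j) :=
  commutatorElement_eq_one_iff_commute.mp <| PresentedGroup.one_of_mem <|
    Or.inl <| Or.inl <| Or.inl <| Or.inr ⟨i, j, h, rfl⟩

theorem ρ_mul_σ_mul_σ {i j : Fin (n-1)} (h : (j:ℕ) = (i:ℕ)+1) :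
    ρ n i * σ n j * σ n i = σ n j * σ n i * ρ n j :=
  PresentedGroup.mk_eq_mk_of_mul_inv_mem <| Or.inl <| Or.inl <| Or.inr ⟨i, j, h, rfl⟩

theorem σ_commute_ρ {i j : Fin (n-1)} (h : i = j ∨ (i:ℕ)+1 < (j:ℕ) ∨ (j:ℕ)+1 < (i:ℕ)) :
    Commute (σ n i) (ρ n j) :=
  commutatorElement_eq_one_iff_commute.mp <| PresentedGroup.one_of_mem <| Or.inr ⟨i, j, h, rfl⟩

theorem isConj_σ_of_succ {i j : Fin (n-1)} (h : (j:ℕ) = (i:ℕ)+1) : IsConj (σ n i) (σ n j) :=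
  isConj_iff.mpr ⟨σ n i * σ n j, by rw [σ_braid h]; group⟩

theorem isConj_ρ_of_succ {i j : Fin (n-1)} (h : (j:ℕ) = (i:ℕ)+1) : IsConj (ρ n i) (ρ n j) :=
  (isConj_iff.mpr ⟨σ n j * σ n i, by rw [← ρ_mul_σ_mul_σ h]; group⟩).symm

theorem isConj_σ (i j : Fin (n-1)) : IsConj (σ n i) (σ n j) :=
  isConj_of_isConj_succ (σ n) (fun _ _ => isConj_σ_of_succ rfl) i j

theorem isConj_ρ (i j : Fin (n-1)) : IsConj (ρ n i) (ρ n j) :=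
  isConj_of_isConj_succ (ρ n) (fun _ _ => isConj_ρ_of_succ rfl) i j

open PresentedGroup (of)

abbrev Gen (n : ℕ) := Fin (n-1) ⊕ Fin (n-1)

namespace Gen

def pos : Gen n → ℕ := Sum.elim (fun i => i) (fun i => i)

def moveTo (k : Fin (n-1)) : Gen n → Gen n := Sum.map (fun _ => k) (fun _ => k)

variable {x : Gen n} {k l : Fin (n-1)}

@[simp] theorem pos_moveTo : (x.moveTo k).pos = k := by cases x <;> rfl

@[simp] theorem moveTo_moveTo : (x.moveTo k).moveTo l = x.moveTo l := by cases x <;> rfl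

theorem moveTo_eq_self (h : x.pos = k) : x.moveTo k = x := by
  cases x <;> simp only [moveTo, Sum.map_inl, Sum.map_inr, Sum.inl.injEq, Sum.inr.injEq] <;>
    exact (Fin.ext h).symm

end Gen

theorem commute_of_of {x y : Gen n} (hxy : x.pos ≠ y.pos + 1) (hyx : y.pos ≠ x.pos + 1) :
    Commute (of x : SG n) (of y) := by
  have key : ∀ i j : Fin (n-1), (i:ℕ) ≠ j + 1 → (j:ℕ) ≠ i + 1 →
      i = j ∨ (i:ℕ)+1 < (j:ℕ) ∨ (j:ℕ)+1 < (i:ℕ) := by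
    intro i j h h'
    rcases eq_or_ne i j with rfl | hne
    · exact Or.inl rfl
    · have := Fin.val_ne_of_ne hne
      omega
  rcases x with i | i <;> rcases y with j | j <;> rcases key i j hxy hyx with rfl | hfar
  · exact Commute.refl _
  · exact σ_commute_σ hfar
  · exact σ_commute_ρ (Or.inl rfl)
  · exact σ_commute_ρ (Or.inr hfar)
  · exact (σ_commute_ρ (Or.inl rfl)).symm
  · exact (σ_commute_ρ (Or.inr hfar.symm)).symm
  · exact Commute.refl _
  · exact ρ_commute_ρ hfar

theorem isConj_of_of_moveTo (x : Gen n) (k : Fin (n-1)) :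
    IsConj (of x : SG n) (of (x.moveTo k)) := by
  cases x with
  | inl i => exact isConj_σ i k
  | inr i => exact isConj_ρ i k

variable (k : Fin (n-1))

def genDiv (x : Gen n) : SG n := of x / of (x.moveTo k)

def gensNotAt : Finset (Gen n) := (Finset.univ.erase k).disjSum (Finset.univ.erase k)

theorem mem_gensNotAt {x : Gen n} : x ∈ gensNotAt k ↔ x.pos ≠ k := by
  cases x <;> simp [gensNotAt, Gen.pos, Fin.val_ne_iff]

theorem card_gensNotAt : (gensNotAt k).card = 2 * (n - 2) := by
  simp only [gensNotAt, Finset.card_disjSum, Finset.card_erase_of_mem (Finset.mem_univ k),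
    Finset.card_univ, Fintype.card_fin]
  omega

section

open scoped Classical

noncomputable def commGens : Finset (SG n) := (gensNotAt k).image (genDiv k)

theorem card_commGens_le : (commGens k).card ≤ 2 * (n - 2) :=
  Finset.card_image_le.trans (card_gensNotAt k).le

theorem genDiv_mem_closure {x : Gen n} (hx : x.pos ≠ k) :
    genDiv k x ∈ Subgroup.closure (commGens k : Set (SG n)) :=
  Subgroup.subset_closure <| Finset.mem_coe.mpr <|
    Finset.mem_image_of_mem _ ((mem_gensNotAt k).mpr hx)

theorem closure_commGens_le_commutator :
    Subgroup.closure (commGens k : Set (SG n)) ≤ commutator (SG n) := by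
  rw [Subgroup.closure_le, commGens, Finset.coe_image]
  rintro _ ⟨x, -, rfl⟩
  exact (isConj_of_of_moveTo x k).div_mem_commutator

theorem commutator_le_closure_commGens [(Subgroup.closure (commGens k : Set (SG n))).Normal] :
    commutator (SG n) ≤ Subgroup.closure (commGens k : Set (SG n)) := by
  have hmk : ∀ x : Gen n, ((of x : SG n) : SG n ⧸ Subgroup.closure (commGens k : Set (SG n))) =
      (of (x.moveTo k) : SG n) := by
    intro x
    by_cases hx : x.pos = k
    · rw [Gen.moveTo_eq_self hx]
    · exact QuotientGroup.eq_iff_div_mem.mpr (genDiv_mem_closure k hx)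
  refine Subgroup.commutator_le_of_closure_eq_top (PresentedGroup.closure_range_of _) ?_
  rintro _ ⟨x, rfl⟩ _ ⟨y, rfl⟩
  rw [hmk x, hmk y]
  exact (commute_of_of (by simp) (by simp)).map (QuotientGroup.mk' _)

theorem of_moveTo_mem_normalizer {i₀ i₃ : Fin (n-1)} (h₀ : (i₀ : ℕ) = 0) (h₃ : (i₃ : ℕ) = 3)
    (y : Gen n) :
    (of (y.moveTo i₀) : SG n) ∈
      Subgroup.normalizer (Subgroup.closure (commGens i₀ : Set (SG n)) : Set (SG n)) := by
  refine Subgroup.mem_normalizer_closure_of_commute (y := of (y.moveTo i₃)) ?_ ?_ ?_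
  · have := genDiv_mem_closure i₀ (x := y.moveTo i₃) (by simp [h₀, h₃])
    rwa [genDiv, Gen.moveTo_moveTo, div_eq_mul_inv] at this
  · exact commute_of_of (by simp [h₀, h₃]) (by simp [h₀, h₃])
  · rw [commGens, Finset.coe_image]
    rintro _ ⟨x, -, rfl⟩
    rw [genDiv, div_eq_mul_inv]
    by_cases h₁ : x.pos = 1
    · exact Or.inr <| (commute_of_of (by simp [h₁, h₃]) (by simp [h₁, h₃])).mul_right
        (commute_of_of (by simp [h₀, h₃]) (by simp [h₀, h₃])).inv_right
    · exact Or.inl <| (commute_of_of (by simp [h₀]) (by simpa [h₀] using h₁)).mul_right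
        (commute_of_of (by simp [h₀]) (by simp [h₀])).inv_right

theorem normal_closure_commGens {i₀ i₃ : Fin (n-1)} (h₀ : (i₀ : ℕ) = 0) (h₃ : (i₃ : ℕ) = 3) :
    (Subgroup.closure (commGens i₀ : Set (SG n))).Normal := by
  rw [← Subgroup.normalizer_eq_top_iff, eq_top_iff]
  rintro g -
  refine PresentedGroup.generated_by _ _ (fun (x : Gen n) => ?_) g
  by_cases hx : x.pos = i₀
  · simpa only [Gen.moveTo_eq_self hx] using of_moveTo_mem_normalizer h₀ h₃ x
  · rw [← div_mul_cancel (of x : SG n) (of (x.moveTo i₀))]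
    exact mul_mem (Subgroup.le_normalizer (genDiv_mem_closure i₀ hx))
      (of_moveTo_mem_normalizer h₀ h₃ x)

end

end SingBraid

open SingBraid in
/-- For every integer `n ≥ 5`, the commutator subgroup of `SG_n` is generated by a set of
at most `2n - 4` elements. -/
theorem sg_commutator_rank_le (n : ℕ) (hn : 5 ≤ n) :
    ∃ S : Finset (SG n), S.card ≤ 2 * n - 4 ∧
      Subgroup.closure (S : Set (SG n)) = commutator (SG n) := by
  let i₀ : Fin (n-1) := ⟨0, by omega⟩
  let i₃ : Fin (n-1) := ⟨3, by omega⟩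
  have := normal_closure_commGens (i₀ := i₀) (i₃ := i₃) rfl rfl
  exact ⟨commGens i₀, (card_commGens_le i₀).trans (by omega),
    le_antisymm (closure_commGens_le_commutator i₀) (commutator_le_closure_commGens i₀)⟩
end

section
/- For every integer n ≥ 3, the commutator subgroup GVB_n' = [GVB_n, GVB_n] of the generalized virtual braid group GVB_n is a perfect group if and only if n ≥ 5; that is, [GVB_n', GVB_n'] = GVB_n' holds exactly when n ≥ 5. -/
namespace GenVirtBraid

/-- The free-group generator word for `σ_{i+1}` (0-indexed `i`). -/
def σw (n : ℕ) (i : Fin (n-1)) : FreeGroup (Fin (n-1) ⊕ Fin (n-1)) := FreeGroup.of (Sum.inl i)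

/-- The free-group generator word for `ρ_{i+1}` (0-indexed `i`). -/
def ρw (n : ℕ) (i : Fin (n-1)) : FreeGroup (Fin (n-1) ⊕ Fin (n-1)) := FreeGroup.of (Sum.inr i)

/-- Defining relators of the generalized virtual braid group `GVB_n`. -/
def gvbRels (n : ℕ) : Set (FreeGroup (Fin (n-1) ⊕ Fin (n-1))) :=
  {r | ∃ i j : Fin (n-1), ((i:ℕ)+1 < (j:ℕ) ∨ (j:ℕ)+1 < (i:ℕ)) ∧
      r = σw n i * σw n j * (σw n i)⁻¹ * (σw n j)⁻¹} ∪
  {r | ∃ i j : Fin (n-1), (j:ℕ) = (i:ℕ)+1 ∧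
      r = σw n i * σw n j * σw n i * (σw n j * σw n i * σw n j)⁻¹} ∪
  {r | ∃ i j : Fin (n-1), ((i:ℕ)+1 < (j:ℕ) ∨ (j:ℕ)+1 < (i:ℕ)) ∧
      r = ρw n i * ρw n j * (ρw n i)⁻¹ * (ρw n j)⁻¹} ∪
  {r | ∃ i j : Fin (n-1), (j:ℕ) = (i:ℕ)+1 ∧
      r = ρw n i * ρw n j * ρw n i * (ρw n j * ρw n i * ρw n j)⁻¹} ∪
  {r | ∃ i j : Fin (n-1), (j:ℕ) = (i:ℕ)+1 ∧
      r = ρw n i * σw n j * σw n i * (σw n j * σw n i * ρw n j)⁻¹} ∪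
  {r | ∃ i j : Fin (n-1), (j:ℕ) = (i:ℕ)+1 ∧
      r = ρw n j * σw n i * σw n j * (σw n i * σw n j * ρw n i)⁻¹} ∪
  {r | ∃ i j : Fin (n-1), ((i:ℕ)+1 < (j:ℕ) ∨ (j:ℕ)+1 < (i:ℕ)) ∧
      r = σw n i * ρw n j * (σw n i)⁻¹ * (ρw n j)⁻¹}

/-- The generalized virtual braid group `GVB_n` (Fang's presentation). -/
abbrev GVB (n : ℕ) := PresentedGroup (gvbRels n)

/-- The generator `σ_{i+1}` of `GVB_n` (0-indexed `i`). -/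
def σ (n : ℕ) (i : Fin (n-1)) : GVB n := PresentedGroup.of (Sum.inl i)

/-- The generator `ρ_{i+1}` of `GVB_n` (0-indexed `i`). -/
def ρ (n : ℕ) (i : Fin (n-1)) : GVB n := PresentedGroup.of (Sum.inr i)

end GenVirtBraid

/-!
Let `G = GVB_n` and `N = ⁅G', G'⁆`; the quotient `Q = G ⧸ N` is metabelian. In a metabelian group
a family `t_1, …, t_m` (`m ≥ 4`) satisfying the braid relations is constant: the braid relation puts
`t_j t_i⁻¹` into `Q'`, so all `t_i` act alike by conjugation on the abelian group `Q'`; for adjacent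
`i, j` and an index `k` far from both, `t_k`, hence `t_j`, centralises `⁅t_i, t_j⁆`, and then the
braid relation forces `t_i = t_j`. For `n ≥ 5` the `σ_i` and the `ρ_i` thus collapse to two
commuting elements of `Q`, so `Q` is abelian and `G' ≤ N`.

For `n ≤ 4`, far-apart indices have equal parity, so sending `σ_i` and `ρ_i` to the transposition
`(0 1)` or `(1 2)` according to the parity of `i` defines a map `G →* S_3`. It sends `⁅σ_1, σ_2⁆` to
a 3-cycle, whereas it would kill `G' = ⁅G', G'⁆` if `G'` were perfect, as `S_3` is metabelian.
-/

open Subgroup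
open scoped commutatorElement

theorem Fin.apply_eq_apply_of_forall_succ {α : Type*} {m : ℕ} (f : Fin m → α)
    (h : ∀ i j : Fin m, (j : ℕ) = i + 1 → f i = f j) (i j : Fin m) : f i = f j := by
  have hm : 0 < m := i.pos
  have base : ∀ k (hk : k < m), f ⟨k, hk⟩ = f ⟨0, hm⟩ := by
    intro k
    induction k with
    | zero => intro; rfl
    | succ k ih => intro hk; rw [← h ⟨k, by omega⟩ ⟨k + 1, hk⟩ rfl, ih]
  exact (base i i.2).trans (base j j.2).symm

section Braid

variable {Q : Type*} [Group Q]

theorem eq_of_braid_of_commute_commutatorElement {x y : Q} (hb : x * y * x = y * x * y)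
    (h : Commute y ⁅x, y⁆) : x = y := by
  have hx : x * y * x = ⁅x, y⁆ * y * (x * x) := by group
  have hy : y * x * y = ⁅x, y⁆ * y * (y * x) := by rw [← h.eq]; group
  rw [hx, hy] at hb
  exact mul_right_cancel (mul_left_cancel hb)

theorem eq_of_braid_of_commute {x y : Q} (hb : x * y * x = y * x * y) (h : Commute x y) :
    x = y :=
  eq_of_braid_of_commute_commutatorElement hb <| by
    rw [commutatorElement_eq_one_iff_commute.mpr h]; exact Commute.one_right y

theorem conj_eq_conj_of_mul_inv_mem_commutator (hQ : ⁅commutator Q, commutator Q⁆ = ⊥)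
    {x y a : Q} (hxy : x * y⁻¹ ∈ commutator Q) (ha : a ∈ commutator Q) :
    x * a * x⁻¹ = y * a * y⁻¹ := by
  have hb : y * a * y⁻¹ ∈ commutator Q := (commutator_normal ⊤ ⊤).conj_mem a ha y
  have hc := mem_centralizer_iff.mp (commutator_eq_bot_iff_le_centralizer.mp hQ hxy) _ hb
  calc x * a * x⁻¹ = (x * y⁻¹) * (y * a * y⁻¹) * (x * y⁻¹)⁻¹ := by group
    _ = y * a * y⁻¹ := by rw [← hc]; group

structure IsBraidFamily {m : ℕ} (t : Fin m → Q) : Prop where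
  braid : ∀ i j : Fin m, (j : ℕ) = i + 1 → t i * t j * t i = t j * t i * t j
  commute : ∀ i j : Fin m, (i : ℕ) + 1 < j ∨ (j : ℕ) + 1 < i → Commute (t i) (t j)

namespace IsBraidFamily

variable {m : ℕ} {t : Fin m → Q}

theorem map {R : Type*} [Group R] (ht : IsBraidFamily t) (f : Q →* R) :
    IsBraidFamily fun i => f (t i) where
  braid i j hij := by simp only [← map_mul, ht.braid i j hij]
  commute i j hij := (ht.commute i j hij).map f

theorem mul_inv_mem_commutator (ht : IsBraidFamily t) (i j : Fin m) :
    t i * (t j)⁻¹ ∈ commutator Q := by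
  have hab : ∀ i j, Abelianization.of (t i) = Abelianization.of (t j) :=
    Fin.apply_eq_apply_of_forall_succ _ fun i j hij =>
      eq_of_braid_of_commute ((ht.map Abelianization.of).braid i j hij) (Commute.all _ _)
  rw [← Abelianization.ker_of, MonoidHom.mem_ker, map_mul, map_inv, hab i j, mul_inv_cancel]

theorem eq_of_far (hQ : ⁅commutator Q, commutator Q⁆ = ⊥) (ht : IsBraidFamily t) {i j k : Fin m}
    (hij : (j : ℕ) = i + 1) (hik : (i : ℕ) + 1 < k ∨ (k : ℕ) + 1 < i)
    (hjk : (j : ℕ) + 1 < k ∨ (k : ℕ) + 1 < j) : t i = t j := by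
  have hki := (ht.commute i k hik).symm
  have hkj := (ht.commute j k hjk).symm
  have hk : Commute (t k) ⁅t i, t j⁆ := by
    rw [commutatorElement_def]
    exact ((hki.mul_right hkj).mul_right hki.inv_right).mul_right hkj.inv_right
  have hmem : ⁅t i, t j⁆ ∈ commutator Q :=
    commutator_mem_commutator (mem_top (t i)) (mem_top (t j))
  refine eq_of_braid_of_commute_commutatorElement (ht.braid i j hij) ?_
  rw [commute_iff_eq, ← mul_inv_eq_iff_eq_mul,
    conj_eq_conj_of_mul_inv_mem_commutator hQ (ht.mul_inv_mem_commutator j k) hmem, hk.eq,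
    mul_inv_cancel_right]

theorem eq_of_succ (hQ : ⁅commutator Q, commutator Q⁆ = ⊥) (hm : 4 ≤ m) (ht : IsBraidFamily t)
    {i j : Fin m} (hij : (j : ℕ) = i + 1) : t i = t j := by
  by_cases hlo : 2 ≤ (i : ℕ)
  · exact ht.eq_of_far hQ (k := ⟨i - 2, by omega⟩) hij (by simp only; omega) (by simp only; omega)
  by_cases hhi : (i : ℕ) + 4 ≤ m
  · exact ht.eq_of_far hQ (k := ⟨i + 3, by omega⟩) hij (by simp only; omega) (by simp only; omega)
  -- only `m = 4`, `i = 1` is left: there `t 2 = t 3` and `t 3` commutes with `t 1`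
  have h23 : t ⟨2, by omega⟩ = t ⟨3, by omega⟩ :=
    ht.eq_of_far hQ (k := ⟨0, by omega⟩) rfl (by simp only; omega) (by simp only; omega)
  have hj : j = ⟨2, by omega⟩ := Fin.ext (by simp only; omega)
  refine eq_of_braid_of_commute (ht.braid i j hij) ?_
  rw [hj, h23]
  exact ht.commute i _ (by simp only; omega)

theorem eq_of_four_le (hQ : ⁅commutator Q, commutator Q⁆ = ⊥) (hm : 4 ≤ m)
    (ht : IsBraidFamily t) (i j : Fin m) : t i = t j :=
  Fin.apply_eq_apply_of_forall_succ t (fun _ _ => ht.eq_of_succ hQ hm) i j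

end IsBraidFamily

end Braid

section Commutator

variable {G H : Type*} [Group G] [Group H]

theorem derivedSeries_two : derivedSeries G 2 = ⁅commutator G, commutator G⁆ := by
  rw [derivedSeries_succ, derivedSeries_one]

theorem commutator_le_ker_of_commute {ι : Type*} {g : ι → G} (hg : closure (Set.range g) = ⊤)
    (f : G →* H) (hf : ∀ i j, Commute (f (g i)) (f (g j))) : commutator G ≤ f.ker := by
  have hcomm : IsMulCommutative (closure (Set.range (f ∘ g))) :=
    isMulCommutative_closure <| by
      rintro _ ⟨i, rfl⟩ _ ⟨j, rfl⟩
      exact hf i j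
  rw [← Subgroup.map_eq_bot_iff, commutator_def, map_commutator, ← hg, MonoidHom.map_closure,
    ← Set.range_comp]
  exact commutator_self_eq_bot_iff.mpr hcomm

theorem commutator_le_ker_of_commutator_perfect
    (hG : ⁅commutator G, commutator G⁆ = commutator G) (hH : ⁅commutator H, commutator H⁆ = ⊥)
    (f : G →* H) : commutator G ≤ f.ker := by
  have h := map_derivedSeries_le_derivedSeries f 2
  rw [derivedSeries_two, derivedSeries_two, hG, hH, le_bot_iff] at h
  exact (Subgroup.map_eq_bot_iff _).mp h

theorem commutator_commutator_quotient_eq_bot :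
    ⁅commutator (G ⧸ ⁅commutator G, commutator G⁆), commutator (G ⧸ ⁅commutator G, commutator G⁆)⁆
      = ⊥ := by
  have h := map_derivedSeries_eq (QuotientGroup.mk'_surjective ⁅commutator G, commutator G⁆) 2
  rw [derivedSeries_two, derivedSeries_two, QuotientGroup.map_mk'_self] at h
  exact h.symm

end Commutator

open Equiv in
theorem commutator_commutator_perm_fin_three :
    ⁅commutator (Perm (Fin 3)), commutator (Perm (Fin 3))⁆ = ⊥ := by
  have hsign : commutator (Perm (Fin 3)) ≤ Perm.sign.ker := Abelianization.commutator_subset_ker _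
  have hcomm : ∀ x y : Perm (Fin 3), Perm.sign x = 1 → Perm.sign y = 1 → x * y = y * x := by
    decide
  rw [eq_bot_iff, commutator_le]
  exact fun x hx y hy =>
    mem_bot.mpr (commutatorElement_eq_one_iff_commute.mpr (hcomm x y (hsign hx) (hsign hy)))

def parityTransposition (i : ℕ) : Equiv.Perm (Fin 3) :=
  if i % 2 = 0 then Equiv.swap 0 1 else Equiv.swap 1 2

theorem isBraidFamily_parityTransposition {m : ℕ} (hm : m ≤ 3) :
    IsBraidFamily fun i : Fin m => parityTransposition i where
  braid i j hij := by
    rw [hij]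
    unfold parityTransposition
    split_ifs <;> first | omega | decide
  commute i j hij := by
    have hparity : (i : ℕ) % 2 = (j : ℕ) % 2 := by omega
    simp only [parityTransposition, hparity]
    exact Commute.refl _

namespace GenVirtBraid

variable {n : ℕ}

theorem mk_σw (i : Fin (n - 1)) : PresentedGroup.mk (gvbRels n) (σw n i) = σ n i := rfl

theorem mk_ρw (i : Fin (n - 1)) : PresentedGroup.mk (gvbRels n) (ρw n i) = ρ n i := rfl

theorem isBraidFamily_σ (n : ℕ) : IsBraidFamily (σ n) where
  braid i j hij := by
    have h := PresentedGroup.one_of_mem (rels := gvbRels n)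
      (Or.inl <| Or.inl <| Or.inl <| Or.inl <| Or.inl <| Or.inr ⟨i, j, hij, rfl⟩)
    simpa only [map_mul, map_inv, mk_σw, mul_inv_eq_one] using h
  commute i j hij := by
    have h := PresentedGroup.one_of_mem (rels := gvbRels n)
      (Or.inl <| Or.inl <| Or.inl <| Or.inl <| Or.inl <| Or.inl ⟨i, j, hij, rfl⟩)
    simp only [map_mul, map_inv, mk_σw] at h
    exact commutatorElement_eq_one_iff_commute.mp h

theorem isBraidFamily_ρ (n : ℕ) : IsBraidFamily (ρ n) where
  braid i j hij := by
    have h := PresentedGroup.one_of_mem (rels := gvbRels n)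
      (Or.inl <| Or.inl <| Or.inl <| Or.inr ⟨i, j, hij, rfl⟩)
    simpa only [map_mul, map_inv, mk_ρw, mul_inv_eq_one] using h
  commute i j hij := by
    have h := PresentedGroup.one_of_mem (rels := gvbRels n)
      (Or.inl <| Or.inl <| Or.inl <| Or.inl <| Or.inr ⟨i, j, hij, rfl⟩)
    simp only [map_mul, map_inv, mk_ρw] at h
    exact commutatorElement_eq_one_iff_commute.mp h

theorem commute_σ_ρ {i j : Fin (n - 1)} (hij : (i : ℕ) + 1 < j ∨ (j : ℕ) + 1 < i) :
    Commute (σ n i) (ρ n j) := by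
  have h := PresentedGroup.one_of_mem (rels := gvbRels n) (Or.inr ⟨i, j, hij, rfl⟩)
  simp only [map_mul, map_inv, mk_σw, mk_ρw] at h
  exact commutatorElement_eq_one_iff_commute.mp h

section Lift

variable {H : Type*} [Group H] {s r : Fin (n - 1) → H}

def lift (hs : IsBraidFamily s) (hr : IsBraidFamily r)
    (hmix : ∀ i j : Fin (n - 1), (j : ℕ) = i + 1 →
      r i * s j * s i = s j * s i * r j ∧ r j * s i * s j = s i * s j * r i)
    (hsr : ∀ i j : Fin (n - 1), (i : ℕ) + 1 < j ∨ (j : ℕ) + 1 < i → Commute (s i) (r j)) :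
    GVB n →* H :=
  PresentedGroup.toGroup (f := Sum.elim s r) <| by
    rintro _ ((((((⟨i, j, h, rfl⟩ | ⟨i, j, h, rfl⟩) | ⟨i, j, h, rfl⟩) | ⟨i, j, h, rfl⟩) |
      ⟨i, j, h, rfl⟩) | ⟨i, j, h, rfl⟩) | ⟨i, j, h, rfl⟩) <;>
      simp only [σw, ρw, map_mul, map_inv, FreeGroup.lift_apply_of, Sum.elim_inl, Sum.elim_inr]
    · exact commutatorElement_eq_one_iff_commute.mpr (hs.commute i j h)
    · exact mul_inv_eq_one.mpr (hs.braid i j h)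
    · exact commutatorElement_eq_one_iff_commute.mpr (hr.commute i j h)
    · exact mul_inv_eq_one.mpr (hr.braid i j h)
    · exact mul_inv_eq_one.mpr (hmix i j h).1
    · exact mul_inv_eq_one.mpr (hmix i j h).2
    · exact commutatorElement_eq_one_iff_commute.mpr (hsr i j h)

theorem lift_σ {hs : IsBraidFamily s} {hr : IsBraidFamily r} {hmix hsr} (i : Fin (n - 1)) :
    lift hs hr hmix hsr (σ n i) = s i :=
  PresentedGroup.toGroup.of _

end Lift

theorem commutator_not_perfect_of_le_four (hn3 : 3 ≤ n) (hn4 : n ≤ 4) :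
    ⁅commutator (GVB n), commutator (GVB n)⁆ ≠ commutator (GVB n) := by
  intro hP
  have hp := isBraidFamily_parityTransposition (m := n - 1) (by omega)
  let φ := lift hp hp (fun i j hij => ⟨hp.braid i j hij, (hp.braid i j hij).symm⟩) hp.commute
  have hker := commutator_le_ker_of_commutator_perfect hP commutator_commutator_perm_fin_three φ
    (commutator_mem_commutator (mem_top (σ n ⟨0, by omega⟩)) (mem_top (σ n ⟨1, by omega⟩)))
  rw [MonoidHom.mem_ker, map_commutatorElement, lift_σ, lift_σ] at hker
  exact (by decide : ⁅parityTransposition 0, parityTransposition 1⁆ ≠ 1) hker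

theorem commutator_perfect_of_five_le (hn : 5 ≤ n) :
    ⁅commutator (GVB n), commutator (GVB n)⁆ = commutator (GVB n) := by
  set N := ⁅commutator (GVB n), commutator (GVB n)⁆
  let π := QuotientGroup.mk' N
  have hQ := commutator_commutator_quotient_eq_bot (G := GVB n)
  have hσ := ((isBraidFamily_σ n).map π).eq_of_four_le hQ (by omega)
  have hρ := ((isBraidFamily_ρ n).map π).eq_of_four_le hQ (by omega)
  have hσρ := (commute_σ_ρ (n := n) (i := ⟨0, by omega⟩) (j := ⟨2, by omega⟩)
    (by simp only; omega)).map π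
  have hgen : ∀ x, π (PresentedGroup.of x) = π (σ n ⟨0, by omega⟩) ∨
      π (PresentedGroup.of x) = π (ρ n ⟨2, by omega⟩) := by
    rintro (i | i)
    exacts [Or.inl (hσ i _), Or.inr (hρ i _)]
  refine le_antisymm (commutator_le_self _) ?_
  rw [← QuotientGroup.ker_mk' N]
  refine commutator_le_ker_of_commute (PresentedGroup.closure_range_of _) π fun x y => ?_
  rcases hgen x with hx | hx <;> rcases hgen y with hy | hy <;> rw [hx, hy]
  exacts [hσρ, hσρ.symm]

end GenVirtBraid

open GenVirtBraid in
/-- For every integer `n ≥ 3`, the commutator subgroup of `GVB_n` is perfect iff `n ≥ 5`. -/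
theorem gvb_commutator_perfect_iff (n : ℕ) (hn : 3 ≤ n) :
    ⁅commutator (GVB n), commutator (GVB n)⁆ = commutator (GVB n) ↔ 5 ≤ n := by
  refine ⟨fun hP => ?_, commutator_perfect_of_five_le⟩
  by_contra h
  exact commutator_not_perfect_of_le_four hn (by omega) hP
end
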